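/- Let (λ_k)_{k∈ℕ} be a sequence of positive real numbers, β > 0, and μ a real number with μ < √λ_k for every k. Assume the series Σ_k 1/(exp(β(√λ_k − μ)) − 1) converges. Then Σ_k 1/(exp(β(√λ_k − μ)) − 1) = ∫₀^∞ h_b(t, βμ) · (Σ_k exp(−t β² λ_k)) dt, where h_b(t,a) = (4π)^{-1/2} t^{-3/2} Σ_{j=1}^∞ j · exp(−j²/(4t) + j·a). (Heat-trace representation of the bosonic quantum heat trace Θ_b(β,μ).) -/

import Mathlib

open MeasureTheory

/-- The bosonic subordination kernel
`h_b(t,a) = (4π)^{-1/2} t^{-3/2} Σ_{j≥1} j e^{−j²/(4t)+j a}`. -/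
noncomputable def bosonicKernel (t a : ℝ) : ℝ :=
  (4 * Real.pi) ^ (-(1 : ℝ) / 2) * t ^ (-(3 : ℝ) / 2) *
    ∑' j : ℕ, ((j : ℝ) + 1) * Real.exp (-((j : ℝ) + 1) ^ 2 / (4 * t) + ((j : ℝ) + 1) * a)

namespace BQHT

open MeasureTheory Real Set



/-- Step A derivative/injectivity setup and the Gaussian substitution. -/
lemma stepA (p q : ℝ) (hp : 0 < p) (hq : 0 < q) :
    IntegrableOn (fun x : ℝ => (q + p / x ^ 2) * Real.exp (-(q ^ 2 * x ^ 2) - p ^ 2 / x ^ 2))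
      (Ioi 0) ∧
    ∫ x in Ioi (0:ℝ), (q + p / x ^ 2) * Real.exp (-(q ^ 2 * x ^ 2) - p ^ 2 / x ^ 2)
      = Real.sqrt Real.pi * Real.exp (-(2 * p * q)) := by
  set φ : ℝ → ℝ := fun x => q * x - p / x with hφ
  have hderiv : ∀ x ∈ Ioi (0:ℝ), HasDerivWithinAt φ (q + p / x ^ 2) (Ioi 0) x := by
    intro x hx
    have hx0 : x ≠ 0 := ne_of_gt hx
    have h1 : HasDerivAt (fun x : ℝ => q * x) q x := by
      simpa using (hasDerivAt_id x).const_mul q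
    have h2 : HasDerivAt (fun x : ℝ => p / x) (p * (-(x ^ 2)⁻¹)) x := by
      simpa [div_eq_mul_inv, mul_comm] using (hasDerivAt_inv hx0).const_mul p
    have := h1.sub h2
    have heq : q - p * (-(x ^ 2)⁻¹) = q + p / x ^ 2 := by field_simp; ring
    exact (heq ▸ this).hasDerivWithinAt
  have hinj : InjOn φ (Ioi 0) := by
    have hmono : StrictMonoOn φ (Ioi 0) := by
      intro x hx y hy hxy
      simp only [hφ]
      have h1 : q * x < q * y := by nlinarith [mem_Ioi.mp hx]
      have h2 : p / y ≤ p / x := by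
        apply div_le_div_of_nonneg_left hp.le (mem_Ioi.mp hx) hxy.le
      linarith
    exact hmono.injOn
  have himg : φ '' Ioi 0 = univ := by
    apply eq_univ_iff_forall.mpr
    intro y
    set s := Real.sqrt (y ^ 2 + 4 * p * q) with hs
    have hs2 : s ^ 2 = y ^ 2 + 4 * p * q := Real.sq_sqrt (by positivity)
    have hsy : -y < s := by
      have h1 : Real.sqrt (y ^ 2) < s := Real.sqrt_lt_sqrt (by positivity) (by nlinarith)
      have h2 : |y| < s := by rwa [Real.sqrt_sq_eq_abs] at h1
      linarith [neg_abs_le y]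
    have hx0 : 0 < (y + s) / (2 * q) := by
      apply div_pos (by linarith) (by linarith)
    refine ⟨(y + s) / (2 * q), mem_Ioi.mpr hx0, ?_⟩
    simp only [hφ]
    have hys : y + s ≠ 0 := by nlinarith
    have hq0 : (2:ℝ) * q ≠ 0 := by positivity
    field_simp
    ring_nf
    nlinarith [hs2]
  have hgauss : Integrable (fun u : ℝ => Real.exp (-u ^ 2)) := by
    simpa using integrable_exp_neg_mul_sq (show (0:ℝ) < 1 by norm_num)
  have key := integral_image_eq_integral_abs_deriv_smul (measurableSet_Ioi)
      hderiv hinj (fun u => Real.exp (-u ^ 2))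
  have keyInt := (integrableOn_image_iff_integrableOn_abs_deriv_smul (measurableSet_Ioi)
      hderiv hinj (fun u => Real.exp (-u ^ 2))).mp (by rw [himg]; exact hgauss.integrableOn)
  have hcong : ∀ x ∈ Ioi (0:ℝ),
      |q + p / x ^ 2| • Real.exp (-(φ x) ^ 2)
        = Real.exp (2 * p * q) * ((q + p / x ^ 2) * Real.exp (-(q ^ 2 * x ^ 2) - p ^ 2 / x ^ 2)) := by
    intro x hx
    have hx0 : (0:ℝ) < x := hx
    have habs : |q + p / x ^ 2| = q + p / x ^ 2 := abs_of_pos (by positivity)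
    have hexp : -(φ x) ^ 2 = 2 * p * q + (-(q ^ 2 * x ^ 2) - p ^ 2 / x ^ 2) := by
      simp only [hφ]; field_simp; ring
    rw [smul_eq_mul, habs, hexp, Real.exp_add]
    ring
  have hInt2 : IntegrableOn
      (fun x : ℝ => Real.exp (2*p*q) * ((q + p / x ^ 2) * Real.exp (-(q ^ 2 * x ^ 2) - p ^ 2 / x ^ 2)))
      (Ioi 0) := keyInt.congr_fun hcong measurableSet_Ioi
  have hInt3 : IntegrableOn
      (fun x : ℝ => (q + p / x ^ 2) * Real.exp (-(q ^ 2 * x ^ 2) - p ^ 2 / x ^ 2)) (Ioi 0) := by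
    have h4 : IntegrableOn
        (fun x : ℝ => Real.exp (-(2*p*q)) * (Real.exp (2*p*q) * ((q + p / x ^ 2) * Real.exp (-(q ^ 2 * x ^ 2) - p ^ 2 / x ^ 2))))
        (Ioi 0) := hInt2.const_mul (Real.exp (-(2*p*q)))
    refine h4.congr_fun (fun x _ => ?_) measurableSet_Ioi
    beta_reduce
    rw [← mul_assoc, ← Real.exp_add]
    norm_num
  refine ⟨hInt3, ?_⟩
  have hval : ∫ u in φ '' Ioi 0, Real.exp (-u ^ 2) = Real.sqrt Real.pi := by
    rw [himg, Measure.restrict_univ]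
    simpa using integral_gaussian 1
  rw [key] at hval
  rw [setIntegral_congr_fun measurableSet_Ioi hcong, integral_const_mul] at hval
  have he : Real.exp (2*p*q) ≠ 0 := Real.exp_ne_zero _
  rw [Real.exp_neg]
  rw [← hval, mul_comm (Real.exp (2*p*q)), mul_assoc, mul_inv_cancel₀ he, mul_one]


lemma stepE (p q : ℝ) (hp : 0 < p) (hq : 0 < q) :
    IntegrableOn (fun x : ℝ => (p / x ^ 2) * Real.exp (-(q ^ 2 * x ^ 2) - p ^ 2 / x ^ 2)) (Ioi 0) ∧
    ∫ x in Ioi (0:ℝ), (p / x ^ 2) * Real.exp (-(q ^ 2 * x ^ 2) - p ^ 2 / x ^ 2)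
      = Real.sqrt Real.pi * Real.exp (-(2 * p * q)) / 2 := by
  obtain ⟨hA, hAval⟩ := stepA p q hp hq
  -- measurability of the pieces
  have hmeas : ∀ c : ℝ, AEStronglyMeasurable
      (fun x : ℝ => (c / x ^ 2) * Real.exp (-(q ^ 2 * x ^ 2) - p ^ 2 / x ^ 2))
      (volume.restrict (Ioi 0)) := by
    intro c
    apply Measurable.aestronglyMeasurable
    fun_prop
  have hmeas1 : AEStronglyMeasurable
      (fun x : ℝ => q * Real.exp (-(q ^ 2 * x ^ 2) - p ^ 2 / x ^ 2))
      (volume.restrict (Ioi 0)) := by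
    apply Measurable.aestronglyMeasurable; fun_prop
  -- part 2 integrable by domination
  have hf2 : IntegrableOn (fun x : ℝ => (p / x ^ 2) * Real.exp (-(q ^ 2 * x ^ 2) - p ^ 2 / x ^ 2))
      (Ioi 0) := by
    apply hA.mono' (hmeas p)
    filter_upwards [ae_restrict_mem measurableSet_Ioi] with x hx
    have hx0 : (0:ℝ) < x := hx
    have h1 : (0:ℝ) ≤ (p / x ^ 2) * Real.exp (-(q ^ 2 * x ^ 2) - p ^ 2 / x ^ 2) := by positivity
    rw [Real.norm_eq_abs, abs_of_nonneg h1]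
    have : (0:ℝ) ≤ q * Real.exp (-(q ^ 2 * x ^ 2) - p ^ 2 / x ^ 2) := by positivity
    nlinarith [Real.exp_pos (-(q ^ 2 * x ^ 2) - p ^ 2 / x ^ 2)]
  have hf1 : IntegrableOn (fun x : ℝ => q * Real.exp (-(q ^ 2 * x ^ 2) - p ^ 2 / x ^ 2))
      (Ioi 0) := by
    apply hA.mono' hmeas1
    filter_upwards [ae_restrict_mem measurableSet_Ioi] with x hx
    have hx0 : (0:ℝ) < x := hx
    have h1 : (0:ℝ) ≤ q * Real.exp (-(q ^ 2 * x ^ 2) - p ^ 2 / x ^ 2) := by positivity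
    rw [Real.norm_eq_abs, abs_of_nonneg h1]
    have : (0:ℝ) ≤ (p / x ^ 2) * Real.exp (-(q ^ 2 * x ^ 2) - p ^ 2 / x ^ 2) := by positivity
    nlinarith
  -- step B : ∫ f2 = ∫ f1 via x ↦ (p/q)/x
  have hBval : ∫ x in Ioi (0:ℝ), (p / x ^ 2) * Real.exp (-(q ^ 2 * x ^ 2) - p ^ 2 / x ^ 2)
      = ∫ x in Ioi (0:ℝ), q * Real.exp (-(q ^ 2 * x ^ 2) - p ^ 2 / x ^ 2) := by
    set ψ : ℝ → ℝ := fun x => (p/q) / x with hψ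
    have hderiv : ∀ x ∈ Ioi (0:ℝ), HasDerivWithinAt ψ (-((p/q) / x ^ 2)) (Ioi 0) x := by
      intro x hx
      have hx0 : x ≠ 0 := ne_of_gt hx
      have h2 : HasDerivAt ψ ((p/q) * (-(x ^ 2)⁻¹)) x := by
        simpa [hψ, div_eq_mul_inv, mul_comm] using (hasDerivAt_inv hx0).const_mul (p/q)
      have heq : (p/q) * (-(x ^ 2)⁻¹) = -((p/q) / x ^ 2) := by field_simp
      exact (heq ▸ h2).hasDerivWithinAt
    have hinj : InjOn ψ (Ioi 0) := by
      intro x hx y hy hxy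
      have hx0 : (0:ℝ) < x := hx
      have hy0 : (0:ℝ) < y := hy
      have hpq : (0:ℝ) < p / q := by positivity
      simp only [hψ] at hxy
      rw [div_eq_div_iff hx0.ne' hy0.ne'] at hxy
      exact (mul_left_cancel₀ hpq.ne' hxy).symm
    have himg : ψ '' Ioi 0 = Ioi 0 := by
      ext y; constructor
      · rintro ⟨x, hx, rfl⟩
        have hx0 : (0:ℝ) < x := hx
        exact mem_Ioi.mpr (by positivity)
      · intro hy
        have hy0 : (0:ℝ) < y := hy
        refine ⟨(p/q)/y, mem_Ioi.mpr (by positivity), ?_⟩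
        simp only [hψ]
        field_simp
    have key := integral_image_eq_integral_abs_deriv_smul (measurableSet_Ioi)
        hderiv hinj (fun u => q * Real.exp (-(q ^ 2 * u ^ 2) - p ^ 2 / u ^ 2))
    rw [himg] at key
    rw [key]
    apply setIntegral_congr_fun measurableSet_Ioi
    intro x hx
    have hx0 : (0:ℝ) < x := hx
    have habs : |(-((p/q) / x ^ 2))| = (p/q)/x^2 := by
      rw [abs_neg]; exact abs_of_pos (by positivity)
    simp only [smul_eq_mul]
    rw [habs]
    have e1 : q ^ 2 * (ψ x) ^ 2 = p ^ 2 / x ^ 2 := by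
      simp only [hψ]; field_simp
    have e2 : p ^ 2 / (ψ x) ^ 2 = q ^ 2 * x ^ 2 := by
      simp only [hψ]; field_simp
    rw [e1, e2]
    have : -(p ^ 2 / x ^ 2) - q ^ 2 * x ^ 2 = -(q ^ 2 * x ^ 2) - p ^ 2 / x ^ 2 := by ring
    rw [this]
    field_simp
  -- combine
  have hsplit : ∫ x in Ioi (0:ℝ), (q + p / x ^ 2) * Real.exp (-(q ^ 2 * x ^ 2) - p ^ 2 / x ^ 2)
      = (∫ x in Ioi (0:ℝ), q * Real.exp (-(q ^ 2 * x ^ 2) - p ^ 2 / x ^ 2))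
        + ∫ x in Ioi (0:ℝ), (p / x ^ 2) * Real.exp (-(q ^ 2 * x ^ 2) - p ^ 2 / x ^ 2) := by
    rw [← integral_add hf1 hf2]
    apply setIntegral_congr_fun measurableSet_Ioi
    intro x hx; ring
  refine ⟨hf2, ?_⟩
  rw [hAval, hBval] at hsplit
  linarith [hsplit, hBval]

lemma coreIntegral (p q : ℝ) (hp : 0 < p) (hq : 0 < q) :
    IntegrableOn (fun t : ℝ => t ^ (-(3:ℝ)/2) * Real.exp (-p ^ 2 / t - q ^ 2 * t)) (Ioi 0) ∧
    ∫ t in Ioi (0:ℝ), t ^ (-(3:ℝ)/2) * Real.exp (-p ^ 2 / t - q ^ 2 * t)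
      = Real.sqrt Real.pi / p * Real.exp (-(2 * p * q)) := by
  obtain ⟨hE, hEval⟩ := stepE p q hp hq
  set χ : ℝ → ℝ := fun x => x ^ 2 with hχ
  have hderiv : ∀ x ∈ Ioi (0:ℝ), HasDerivWithinAt χ (2 * x) (Ioi 0) x := by
    intro x hx
    simpa using (hasDerivAt_pow 2 x).hasDerivWithinAt
  have hinj : InjOn χ (Ioi 0) := by
    intro x hx y hy hxy
    have hx0 : (0:ℝ) < x := hx
    have hy0 : (0:ℝ) < y := hy
    simp only [hχ] at hxy
    nlinarith
  have himg : χ '' Ioi 0 = Ioi 0 := by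
    ext t; constructor
    · rintro ⟨x, hx, rfl⟩
      have hx0 : (0:ℝ) < x := hx
      exact mem_Ioi.mpr (by positivity)
    · intro ht
      have ht0 : (0:ℝ) < t := ht
      exact ⟨Real.sqrt t, mem_Ioi.mpr (Real.sqrt_pos.mpr ht0), Real.sq_sqrt ht0.le⟩
  have hcong : ∀ x ∈ Ioi (0:ℝ),
      |2 * x| • ((χ x) ^ (-(3:ℝ)/2) * Real.exp (-p ^ 2 / (χ x) - q ^ 2 * (χ x)))
      = (2/p) * ((p / x ^ 2) * Real.exp (-(q ^ 2 * x ^ 2) - p ^ 2 / x ^ 2)) := by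
    intro x hx
    have hx0 : (0:ℝ) < x := hx
    have habs : |2 * x| = 2 * x := abs_of_pos (by positivity)
    have hrpow : (χ x) ^ (-(3:ℝ)/2) = (x ^ 3)⁻¹ := by
      simp only [hχ]
      rw [← Real.rpow_natCast x 2, ← Real.rpow_mul hx0.le]
      have h9 : ((2:ℕ):ℝ) * (-(3:ℝ)/2) = ((-3 : ℤ) : ℝ) := by push_cast; norm_num
      rw [h9, Real.rpow_intCast]
      norm_num
    have hexp : -p ^ 2 / (χ x) - q ^ 2 * (χ x) = -(q ^ 2 * x ^ 2) - p ^ 2 / x ^ 2 := by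
      simp only [hχ]; ring
    rw [smul_eq_mul, habs, hrpow, hexp]
    field_simp
  have key := integral_image_eq_integral_abs_deriv_smul (measurableSet_Ioi)
      hderiv hinj (fun t => t ^ (-(3:ℝ)/2) * Real.exp (-p ^ 2 / t - q ^ 2 * t))
  rw [himg] at key
  have hIntTarget : IntegrableOn (fun t : ℝ => t ^ (-(3:ℝ)/2) * Real.exp (-p ^ 2 / t - q ^ 2 * t))
      (Ioi 0) := by
    rw [show Ioi (0:ℝ) = χ '' Ioi 0 from himg.symm]
    rw [integrableOn_image_iff_integrableOn_abs_deriv_smul measurableSet_Ioi hderiv hinj]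
    have h5 : IntegrableOn
        (fun x : ℝ => (2/p) * ((p / x ^ 2) * Real.exp (-(q ^ 2 * x ^ 2) - p ^ 2 / x ^ 2)))
        (Ioi 0) := hE.const_mul (2/p)
    exact h5.congr_fun (fun x hx => (hcong x hx).symm) measurableSet_Ioi
  refine ⟨hIntTarget, ?_⟩
  rw [key, setIntegral_congr_fun measurableSet_Ioi hcong, integral_const_mul, hEval]
  field_simp


lemma geomSum (x : ℝ) (hx : 0 < x) :
    Summable (fun j : ℕ => Real.exp (-((j:ℝ)+1) * x)) ∧
    ∑' j : ℕ, Real.exp (-((j:ℝ)+1) * x) = 1 / (Real.exp x - 1) := by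
  have hr0 : (0:ℝ) ≤ Real.exp (-x) := (Real.exp_pos _).le
  have hr1 : Real.exp (-x) < 1 := by
    rw [Real.exp_lt_one_iff]; linarith
  have hfe : (fun j : ℕ => Real.exp (-((j:ℝ)+1) * x))
      = fun j : ℕ => Real.exp (-x) * Real.exp (-x) ^ j := by
    funext j
    rw [← Real.exp_nat_mul, ← Real.exp_add]
    congr 1
    ring
  constructor
  · rw [hfe]
    exact (summable_geometric_of_lt_one hr0 hr1).mul_left _
  · rw [hfe, tsum_mul_left, tsum_geometric_of_lt_one hr0 hr1]
    have h1 : Real.exp x - 1 ≠ 0 := by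
      have : (1:ℝ) < Real.exp x := by
        rw [← Real.exp_zero]; exact Real.exp_lt_exp.mpr hx
      linarith
    have h2 : 1 - Real.exp (-x) ≠ 0 := by linarith
    field_simp
    rw [mul_sub, ← Real.exp_add]
    simp

lemma pairIntegral (c q a : ℝ) (hc : 0 < c) (hq : 0 < q) :
    IntegrableOn (fun t : ℝ => (4 * Real.pi) ^ (-(1:ℝ)/2) * t ^ (-(3:ℝ)/2) *
        (c * Real.exp (-c ^ 2 / (4 * t) + c * a)) * Real.exp (-(t * q ^ 2))) (Ioi 0) ∧
    ∫ t in Ioi (0:ℝ), (4 * Real.pi) ^ (-(1:ℝ)/2) * t ^ (-(3:ℝ)/2) *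
        (c * Real.exp (-c ^ 2 / (4 * t) + c * a)) * Real.exp (-(t * q ^ 2))
      = Real.exp (-(c * (q - a))) := by
  obtain ⟨hI, hIval⟩ := coreIntegral (c/2) q (by positivity) hq
  set K : ℝ := (4 * Real.pi) ^ (-(1:ℝ)/2) * c * Real.exp (c * a) with hK
  have hpt : ∀ t : ℝ, (4 * Real.pi) ^ (-(1:ℝ)/2) * t ^ (-(3:ℝ)/2) *
        (c * Real.exp (-c ^ 2 / (4 * t) + c * a)) * Real.exp (-(t * q ^ 2))
      = K * (t ^ (-(3:ℝ)/2) * Real.exp (-(c/2) ^ 2 / t - q ^ 2 * t)) := by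
    intro t
    rw [hK]
    have e1 : Real.exp (-c ^ 2 / (4 * t) + c * a) * Real.exp (-(t * q ^ 2))
        = Real.exp (c * a) * Real.exp (-(c/2) ^ 2 / t - q ^ 2 * t) := by
      rw [← Real.exp_add, ← Real.exp_add]
      congr 1
      ring
    linear_combination ((4 * Real.pi) ^ (-(1:ℝ)/2) * t ^ (-(3:ℝ)/2) * c) * e1
  have h4pi : (4 * Real.pi) ^ (-(1:ℝ)/2) * (2 * Real.sqrt Real.pi) = 1 := by
    have h4 : Real.sqrt (4 * Real.pi) = 2 * Real.sqrt Real.pi := by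
      rw [show (4:ℝ) * Real.pi = 2^2 * Real.pi by norm_num, Real.sqrt_mul (by positivity),
        Real.sqrt_sq (by norm_num : (0:ℝ) ≤ 2)]
    have hrw : (4 * Real.pi) ^ (-(1:ℝ)/2) = (Real.sqrt (4 * Real.pi))⁻¹ := by
      rw [show -(1:ℝ)/2 = -(1/2 : ℝ) by norm_num, Real.rpow_neg (by positivity),
        ← Real.sqrt_eq_rpow]
    rw [hrw, h4]
    have : (0:ℝ) < Real.sqrt Real.pi := Real.sqrt_pos.mpr Real.pi_pos
    field_simp
  constructor
  · have h5 : IntegrableOn (fun t : ℝ => K *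
        (t ^ (-(3:ℝ)/2) * Real.exp (-(c/2) ^ 2 / t - q ^ 2 * t))) (Ioi 0) := by
      have h6 : IntegrableOn (fun t : ℝ => K *
          (t ^ (-(3:ℝ)/2) * Real.exp (-(c/2) ^ 2 / t - q ^ 2 * t))) (Ioi 0) := hI.const_mul K
      exact h6
    exact h5.congr_fun (fun t _ => (hpt t).symm) measurableSet_Ioi
  · rw [setIntegral_congr_fun measurableSet_Ioi (fun t _ => hpt t), integral_const_mul]
    have hcore : ∫ t in Ioi (0:ℝ), t ^ (-(3:ℝ)/2) * Real.exp (-(c/2) ^ 2 / t - q ^ 2 * t)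
        = Real.sqrt Real.pi / (c/2) * Real.exp (-(2 * (c/2) * q)) := by
      have heq : ∀ t : ℝ, -(c/2) ^ 2 / t - q ^ 2 * t = -(c/2) ^ 2 / t - q ^ 2 * t := fun _ => rfl
      exact hIval
    rw [hcore, hK]
    rw [show -(2 * (c/2) * q) = -(c*q) by ring]
    have : (4 * Real.pi) ^ (-(1:ℝ)/2) * c * Real.exp (c * a) *
        (Real.sqrt Real.pi / (c / 2) * Real.exp (-(c * q)))
        = ((4 * Real.pi) ^ (-(1:ℝ)/2) * (2 * Real.sqrt Real.pi)) *
          (Real.exp (c * a) * Real.exp (-(c * q))) := by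
      field_simp
    rw [this, h4pi, one_mul, ← Real.exp_add]
    congr 1
    ring

end BQHT

/-- Heat-trace representation of the bosonic quantum heat trace `Θ_b(β,μ)`:
`Σ_k 1/(e^{β(√λ_k−μ)}−1) = ∫₀^∞ h_b(t,βμ) Σ_k e^{−tβ²λ_k} dt`. -/
theorem bosonic_quantum_heat_trace (lam : ℕ → ℝ) (hlam : ∀ k, 0 < lam k)
    (β μ : ℝ) (hβ : 0 < β) (hμ : ∀ k, μ < Real.sqrt (lam k))
    (hsum : Summable fun k => 1 / (Real.exp (β * (Real.sqrt (lam k) - μ)) - 1)) :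
    (∑' k, 1 / (Real.exp (β * (Real.sqrt (lam k) - μ)) - 1))
      = ∫ t in Set.Ioi (0 : ℝ),
          bosonicKernel t (β * μ) * ∑' k, Real.exp (-(t * β ^ 2) * lam k) := by
  classical
  set ω : ℕ → ℝ := fun k => Real.sqrt (lam k) with hω
  have hωpos : ∀ k, 0 < ω k := fun k => Real.sqrt_pos.mpr (hlam k)
  have hsq : ∀ k, ω k ^ 2 = lam k := fun k => Real.sq_sqrt (hlam k).le
  have hx : ∀ k, 0 < β * (ω k - μ) := fun k => mul_pos hβ (sub_pos.mpr (hμ k))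
  set E : ℕ × ℕ → ℝ := fun p => Real.exp (-((p.2:ℝ) + 1) * (β * (ω p.1 - μ))) with hE
  set F : ℕ × ℕ → ℝ → ℝ := fun p t =>
      (4 * Real.pi) ^ (-(1:ℝ)/2) * t ^ (-(3:ℝ)/2) *
        (((p.2:ℝ) + 1) * Real.exp (-((p.2:ℝ) + 1) ^ 2 / (4 * t) + ((p.2:ℝ) + 1) * (β * μ))) *
        Real.exp (-(t * β ^ 2) * lam p.1) with hF
  -- summability of E over the product
  have hEsum : Summable E := by
    rw [summable_prod_of_nonneg (fun p => (Real.exp_pos _).le)]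
    constructor
    · exact fun k => (BQHT.geomSum _ (hx k)).1
    · apply hsum.congr
      intro k
      exact ((BQHT.geomSum _ (hx k)).2).symm
  -- per-pair integral
  have hFint : ∀ p : ℕ × ℕ, IntegrableOn (F p) (Set.Ioi 0) := by
    intro p
    have h := (BQHT.pairIntegral ((p.2:ℝ) + 1) (β * ω p.1) (β * μ)
      (by positivity) (mul_pos hβ (hωpos p.1))).1
    apply h.congr_fun _ measurableSet_Ioi
    intro t _
    simp only [hF]
    congr 2
    rw [mul_pow, hsq]
    ring
  have hFval : ∀ p : ℕ × ℕ, ∫ t in Set.Ioi (0:ℝ), F p t = E p := by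
    intro p
    have h := (BQHT.pairIntegral ((p.2:ℝ) + 1) (β * ω p.1) (β * μ)
      (by positivity) (mul_pos hβ (hωpos p.1))).2
    have heq : ∀ t : ℝ, (4 * Real.pi) ^ (-(1:ℝ)/2) * t ^ (-(3:ℝ)/2) *
        (((p.2:ℝ) + 1) * Real.exp (-((p.2:ℝ) + 1) ^ 2 / (4 * t) + ((p.2:ℝ) + 1) * (β * μ))) *
        Real.exp (-(t * (β * ω p.1) ^ 2)) = F p t := by
      intro t
      simp only [hF]
      congr 2
      rw [mul_pow, hsq]
      ring
    rw [setIntegral_congr_fun measurableSet_Ioi (fun t _ => heq t)] at h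
    rw [h, hE]
    congr 1
    ring
  -- pointwise identity of the integrands on (0,∞)
  have hptwise : ∀ t ∈ Set.Ioi (0:ℝ),
      bosonicKernel t (β * μ) * ∑' k, Real.exp (-(t * β ^ 2) * lam k)
        = ∑' p : ℕ × ℕ, F p t := by
    intro t ht
    have ht0 : (0:ℝ) < t := ht
    set a : ℝ := β * μ with ha
    set D : ℝ := (4 * Real.pi) ^ (-(1:ℝ)/2) * t ^ (-(3:ℝ)/2) with hD
    have hDpos : 0 < D :=
      mul_pos (Real.rpow_pos_of_pos (by positivity) _) (Real.rpow_pos_of_pos ht0 _)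
    set g : ℕ → ℝ := fun j =>
      ((j:ℝ) + 1) * Real.exp (-((j:ℝ) + 1) ^ 2 / (4 * t) + ((j:ℝ) + 1) * a) with hg
    set h : ℕ → ℝ := fun k => Real.exp (-(t * β ^ 2) * lam k) with hh
    -- summability of g
    have hgsum : Summable g := by
      have hbase : Summable (fun j : ℕ => ((j:ℝ) + 1) * Real.exp (-((j:ℝ) + 1))) := by
        have h0 : Summable (fun n : ℕ => (n:ℝ) * Real.exp (-1) ^ n) := by
          have := summable_pow_mul_geometric_of_norm_lt_one (R := ℝ) 1
            (r := Real.exp (-1)) (by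
              rw [Real.norm_eq_abs, abs_of_pos (Real.exp_pos _), Real.exp_lt_one_iff]
              norm_num)
          simpa using this
        have h1 := (summable_nat_add_iff 1).mpr h0
        apply h1.congr
        intro j
        have he : Real.exp (-((j:ℝ) + 1)) = Real.exp (-1) ^ (j + 1) := by
          rw [← Real.exp_nat_mul]
          congr 1
          push_cast
          ring
        rw [he]
        push_cast
        ring
      refine Summable.of_nonneg_of_le (fun j => by positivity) (fun j => ?_)
        (hbase.mul_left (Real.exp (t * (a + 1) ^ 2)))
      simp only [hg]
      rw [mul_comm (Real.exp (t * (a+1)^2)), mul_assoc, ← Real.exp_add]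
      apply mul_le_mul_of_nonneg_left _ (by positivity)
      apply Real.exp_le_exp.mpr
      set c : ℝ := (j:ℝ) + 1
      have hid : (-c + t*(a+1)^2) - (-c^2/(4*t) + c*a) = (c - 2*t*(a+1))^2 / (4*t) := by
        field_simp
        ring
      have h2 : (0:ℝ) ≤ (c - 2*t*(a+1))^2 / (4*t) := div_nonneg (sq_nonneg _) (by linarith)
      linarith
    -- summability of h
    have hωsum : Summable (fun k => Real.exp (-(β * (ω k - μ)))) := by
      apply Summable.of_nonneg_of_le (fun k => (Real.exp_pos _).le) _ hsum
      intro k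
      have hxk := hx k
      have he1 : (0:ℝ) < Real.exp (β * (ω k - μ)) - 1 := by
        have : (1:ℝ) < Real.exp (β * (ω k - μ)) := by
          rw [← Real.exp_zero]; exact Real.exp_lt_exp.mpr hxk
        linarith
      rw [le_div_iff₀ he1, mul_sub, ← Real.exp_add, neg_add_cancel, Real.exp_zero, mul_one]
      have := Real.exp_pos (-(β * (ω k - μ)))
      linarith
    have hhsum : Summable h := by
      refine Summable.of_nonneg_of_le (fun k => (Real.exp_pos _).le) (fun k => ?_)
        (hωsum.mul_left (Real.exp (1 / (4 * t) - β * μ)))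
      simp only [hh]
      rw [← Real.exp_add]
      apply Real.exp_le_exp.mpr
      have hlk : lam k = ω k ^ 2 := (hsq k).symm
      rw [hlk]
      have h4 : 1 / (4 * t) * (4 * t) = 1 := by field_simp
      nlinarith [sq_nonneg (2 * t * β * ω k - 1), ht0, h4, hωpos k, hβ]
    -- summability of F · t over the product
    have hFnn : ∀ p : ℕ × ℕ, 0 ≤ F p t := by
      intro p
      simp only [hF]
      have h1 : (0:ℝ) ≤ (4 * Real.pi) ^ (-(1:ℝ)/2) :=
        (Real.rpow_pos_of_pos (by positivity) _).le
      have h2 : (0:ℝ) ≤ t ^ (-(3:ℝ)/2) := (Real.rpow_pos_of_pos ht0 _).le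
      positivity
    have hslice : ∀ k, (fun j => F (k, j) t) = fun j => (D * h k) * g j := by
      intro k
      funext j
      simp only [hF, hD, hg, hh]
      ring
    have hFs : Summable (fun p : ℕ × ℕ => F p t) := by
      rw [summable_prod_of_nonneg hFnn]
      constructor
      · intro k
        rw [hslice k]
        exact hgsum.mul_left _
      · apply Summable.congr ((hhsum.mul_left (D * ∑' j, g j)).congr (fun k => rfl))
        intro k
        rw [hslice k, tsum_mul_left]
        ring
    rw [Summable.tsum_prod' hFs (fun k => by rw [hslice k]; exact hgsum.mul_left _)]
    have hinner : ∀ k, ∑' j, F (k, j) t = (D * ∑' j, g j) * h k := by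
      intro k
      rw [hslice k, tsum_mul_left]
      ring
    rw [tsum_congr hinner, tsum_mul_left]
    show bosonicKernel t (β * μ) * ∑' k, h k = _
    rw [bosonicKernel, ← ha, ← hD, ← hg]
  -- measurability
  have hFmeas : ∀ p : ℕ × ℕ, AEStronglyMeasurable (F p) (volume.restrict (Set.Ioi 0)) := by
    intro p
    apply Measurable.aestronglyMeasurable
    simp only [hF]
    fun_prop
  -- the lintegral bound
  have hlint : ∑' p : ℕ × ℕ, ∫⁻ t in Set.Ioi (0:ℝ), ‖F p t‖₊ ≠ ⊤ := by
    have heq : ∀ p : ℕ × ℕ, ∫⁻ t in Set.Ioi (0:ℝ), (‖F p t‖₊ : ENNReal)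
        = ENNReal.ofReal (E p) := by
      intro p
      have hnn : 0 ≤ᵐ[volume.restrict (Set.Ioi (0:ℝ))] F p := by
        filter_upwards [ae_restrict_mem measurableSet_Ioi] with t ht
        simp only [hF]
        have h1 : (0:ℝ) ≤ (4 * Real.pi) ^ (-(1:ℝ)/2) :=
          (Real.rpow_pos_of_pos (by positivity) _).le
        have h2 : (0:ℝ) ≤ t ^ (-(3:ℝ)/2) := (Real.rpow_pos_of_pos (by exact ht) _).le
        positivity
      rw [← hFval p, MeasureTheory.ofReal_integral_eq_lintegral_ofReal (hFint p) hnn]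
      apply lintegral_congr_ae
      filter_upwards [hnn] with t ht
      rw [← Real.enorm_eq_ofReal ht, enorm_eq_nnnorm]
    calc ∑' p : ℕ × ℕ, ∫⁻ t in Set.Ioi (0:ℝ), (‖F p t‖₊ : ENNReal)
        = ∑' p : ℕ × ℕ, ENNReal.ofReal (E p) := by
          exact tsum_congr heq
      _ = ENNReal.ofReal (∑' p, E p) := by
          rw [ENNReal.ofReal_tsum_of_nonneg (fun p => (Real.exp_pos _).le) hEsum]
      _ ≠ ⊤ := ENNReal.ofReal_ne_top
  -- final chain
  calc (∑' k, 1 / (Real.exp (β * (ω k - μ)) - 1))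
      = ∑' k, ∑' j, E (k, j) := tsum_congr (fun k => ((BQHT.geomSum _ (hx k)).2).symm)
    _ = ∑' p : ℕ × ℕ, E p := (Summable.tsum_prod' hEsum (fun k => (BQHT.geomSum _ (hx k)).1)).symm
    _ = ∑' p : ℕ × ℕ, ∫ t in Set.Ioi (0:ℝ), F p t := tsum_congr (fun p => (hFval p).symm)
    _ = ∫ t in Set.Ioi (0:ℝ), ∑' p : ℕ × ℕ, F p t := (integral_tsum hFmeas hlint).symm
    _ = ∫ t in Set.Ioi (0:ℝ),
          bosonicKernel t (β * μ) * ∑' k, Real.exp (-(t * β ^ 2) * lam k) := by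
        apply setIntegral_congr_fun measurableSet_Ioi
        intro t ht
        exact (hptwise t ht).symm
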